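/- arXiv:math/0506239 — 3 statements merged into one kernel-verified Lean document; each statement's English description precedes it below -/
import Mathlib

section
/- Let 0 < p < 1 and 1 ≤ m ≤ n, and set ρ = (1/p − 1)^{−1}·m^{1/2 − 1/p}. Then for every x ∈ ℝⁿ, sup{ ⟨x,z⟩ : z ∈ B^n_{p,∞} ∩ ρB₂ⁿ } ≤ 2ρ·(Σ_{i=1}^m (x_i*)²)^{1/2}, where (x_i*)_{i=1}^n is the non-increasing rearrangement of (|x_i|)_{i=1}^n. Moreover, with ρ = 1/√m, sup{ ⟨x,z⟩ : z ∈ B₁ⁿ ∩ ρB₂ⁿ } ≤ 2ρ·(Σ_{i=1}^m (x_i*)²)^{1/2}. -/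
/-!
Sort `|x|` and `|z|` non-increasingly; by the rearrangement inequality `⟨x, z⟩ ≤ ∑ x*_i z*_i`.
On the first `m` coordinates Cauchy–Schwarz and `‖z‖ ≤ ρ` bound the sum by
`ρ (∑_{i ≤ m} (x*_i)²)^{1/2}`. On the others `x*_i ≤ x*_m ≤ m^{-1/2} (∑_{i ≤ m} (x*_i)²)^{1/2}`,
so it suffices that `∑_{i > m} z*_i ≤ ρ √m`. For `z ∈ B₁ⁿ` this is `‖z‖₁ ≤ 1`; for `z` in the
weak-ℓ_p ball `z*_i ≤ i^{-1/p}`, and comparing the tail with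
`∫_m^∞ t^{-1/p} dt = (1/p - 1)⁻¹ m^{1 - 1/p} = ρ √m` concludes.
-/

open MeasureTheory Real Set
open scoped RealInnerProductSpace Pointwise

noncomputable section

/-- The unit ball of weak-ℓ_p^n: `{x : |{i : |x_i| ≥ s}| ≤ s^{-p}` for all `s > 0}`. -/
def weakLpBall (n : ℕ) (p : ℝ) : Set (EuclideanSpace ℝ (Fin n)) :=
  {x | ∀ s : ℝ, 0 < s →
    ((Finset.univ.filter fun i : Fin n => s ≤ |x i|).card : ℝ) ≤ s ^ (-p)}

/-- The unit ball of ℓ₁ⁿ. -/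
def l1Ball (n : ℕ) : Set (EuclideanSpace ℝ (Fin n)) :=
  {x | ∑ i, |x i| ≤ 1}

theorem exists_perm_antitone_comp {n : ℕ} {α : Type*} [LinearOrder α] (f : Fin n → α) :
    ∃ τ : Equiv.Perm (Fin n), Antitone (f ∘ τ) :=
  ⟨Tuple.sort (OrderDual.toDual ∘ f), monotone_toDual_comp_iff.1 (Tuple.monotone_sort _)⟩

theorem sum_filter_not_val_lt_eq_sum_Ico {M : Type*} [AddCommMonoid M] (f : ℕ → M) (m n : ℕ) :
    ∑ i ∈ Finset.univ.filter (fun i : Fin n => ¬ (i : ℕ) < m), f i = ∑ j ∈ Finset.Ico m n, f j := by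
  rw [Finset.sum_filter, Fin.sum_univ_eq_sum_range (fun j => if ¬ j < m then f j else 0),
    ← Finset.sum_filter]
  congr 1
  ext j
  simp only [Finset.mem_filter, Finset.mem_range, Finset.mem_Ico]
  omega

theorem sum_Ico_rpow_neg_le {q : ℝ} (hq : 1 < q) {m : ℕ} (hm : 1 ≤ m) (n : ℕ) :
    ∑ j ∈ Finset.Ico m n, ((j + 1 : ℕ) : ℝ) ^ (-q) ≤ (q - 1)⁻¹ * (m : ℝ) ^ (1 - q) := by
  have hm0 : (0 : ℝ) < m := by exact_mod_cast hm
  rcases lt_or_ge n m with hnm | hmn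
  · rw [Finset.Ico_eq_empty_of_le hnm.le, Finset.sum_empty]
    have : 0 < q - 1 := by linarith
    positivity
  have hpos : ∀ t ∈ Set.Icc (m : ℝ) n, 0 < t := fun t ht => hm0.trans_le ht.1
  have hanti : AntitoneOn (fun t : ℝ => t ^ (-q)) (Set.Icc (m : ℝ) n) := fun s hs t ht hst =>
    Real.rpow_le_rpow_of_nonpos (hpos s hs) hst (by linarith)
  have h0 : (0 : ℝ) ∉ Set.uIcc (m : ℝ) n := by
    rw [Set.uIcc_of_le (by exact_mod_cast hmn)]
    exact fun h => (hpos 0 h).false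
  calc ∑ j ∈ Finset.Ico m n, ((j + 1 : ℕ) : ℝ) ^ (-q)
      ≤ ∫ t in (m : ℝ)..n, t ^ (-q) := hanti.sum_le_integral_Ico hmn
    _ = ((n : ℝ) ^ (1 - q) - (m : ℝ) ^ (1 - q)) / (1 - q) := by
        rw [integral_rpow (Or.inr ⟨by linarith, h0⟩), neg_add_eq_sub]
    _ = (q - 1)⁻¹ * ((m : ℝ) ^ (1 - q) - (n : ℝ) ^ (1 - q)) := by
        rw [div_eq_mul_inv, ← neg_sub q 1, inv_neg]
        ring
    _ ≤ (q - 1)⁻¹ * (m : ℝ) ^ (1 - q) :=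
        mul_le_mul_of_nonneg_left (sub_le_self _ (by positivity)) (inv_nonneg.2 (by linarith))

theorem abs_apply_le_of_mem_weakLpBall {n : ℕ} {p : ℝ} (hp : 0 < p)
    {z : EuclideanSpace ℝ (Fin n)} (hz : z ∈ weakLpBall n p) {τ : Equiv.Perm (Fin n)}
    (hτ : Antitone fun i => |z (τ i)|) (k : Fin n) :
    |z (τ k)| ≤ ((k + 1 : ℕ) : ℝ) ^ (-p⁻¹) := by
  rcases (abs_nonneg (z (τ k))).eq_or_lt with h | hpos
  · rw [← h]
    positivity
  rw [← inv_neg, Real.le_rpow_inv_iff_of_neg hpos (by positivity) (neg_neg_of_pos hp)]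
  refine le_trans ?_ (hz _ hpos)
  rw [← Fin.card_Iic, ← Finset.card_map τ.toEmbedding, Nat.cast_le]
  refine Finset.card_le_card fun i hi => ?_
  obtain ⟨j, hj, rfl⟩ := Finset.mem_map.1 hi
  exact Finset.mem_filter.2 ⟨Finset.mem_univ _, hτ (Finset.mem_Iic.1 hj)⟩

theorem inner_le_sum_abs_mul_abs_of_antitone {n : ℕ} (x z : EuclideanSpace ℝ (Fin n))
    {σ τ : Equiv.Perm (Fin n)} (hσ : Antitone fun i => |x (σ i)|)
    (hτ : Antitone fun i => |z (τ i)|) :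
    ⟪x, z⟫ ≤ ∑ i, |x (σ i)| * |z (τ i)| :=
  calc ⟪x, z⟫ = ∑ i, x i * z i := by simp [PiLp.inner_apply, mul_comm]
    _ ≤ ∑ i, |x i| * |z i| := Finset.sum_le_sum fun i _ => (abs_mul (x i) (z i)) ▸ le_abs_self _
    _ = ∑ i, |x (σ i)| * |z (τ ((τ⁻¹ * σ) i))| := by
        rw [← Equiv.sum_comp σ]
        simp
    _ ≤ ∑ i, |x (σ i)| * |z (τ i)| := (hσ.monovary hτ).sum_mul_comp_perm_le_sum_mul

section SortedSequences

variable {n m : ℕ}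

theorem Antitone.sum_mul_le_two_mul_sqrt_sum_sq_head {a b : Fin n → ℝ} (ha : Antitone a)
    (ha0 : ∀ i, 0 ≤ a i) (hb0 : ∀ i, 0 ≤ b i) (hm : 1 ≤ m) (hmn : m ≤ n) {ρ : ℝ}
    (hb_head : √(∑ i ∈ Finset.univ.filter (fun i : Fin n => (i : ℕ) < m), b i ^ 2) ≤ ρ)
    (hb_tail : ∑ i ∈ Finset.univ.filter (fun i : Fin n => ¬ (i : ℕ) < m), b i ≤ ρ * √m) :
    ∑ i, a i * b i ≤
      2 * ρ * √(∑ i ∈ Finset.univ.filter (fun i : Fin n => (i : ℕ) < m), a i ^ 2) := by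
  set head := Finset.univ.filter fun i : Fin n => (i : ℕ) < m
  set tail := Finset.univ.filter fun i : Fin n => ¬ (i : ℕ) < m
  set T := √(∑ i ∈ head, a i ^ 2)
  have hρ : 0 ≤ ρ := (Real.sqrt_nonneg _).trans hb_head
  obtain ⟨k, hk⟩ : ∃ k : Fin n, (k : ℕ) + 1 = m := ⟨⟨m - 1, by omega⟩, by simp only; omega⟩
  have le_k_of_mem_head : ∀ i ∈ head, i ≤ k := fun i hi =>
    Fin.le_def.2 (by have := (Finset.mem_filter.1 hi).2; omega)
  have k_le_of_mem_tail : ∀ i ∈ tail, k ≤ i := fun i hi =>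
    Fin.le_def.2 (by have := (Finset.mem_filter.1 hi).2; omega)
  have hk_head : √m * a k ≤ T := by
    rw [← Real.sqrt_sq (ha0 k), ← Real.sqrt_mul (Nat.cast_nonneg m)]
    refine Real.sqrt_le_sqrt ?_
    calc (m : ℝ) * a k ^ 2 = ∑ _i ∈ head, a k ^ 2 := by
          rw [Finset.sum_const, Fin.card_filter_val_lt, min_eq_right hmn, nsmul_eq_mul]
      _ ≤ ∑ i ∈ head, a i ^ 2 := Finset.sum_le_sum fun i hi =>
          pow_le_pow_left₀ (ha0 k) (ha (le_k_of_mem_head i hi)) 2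
  have head_le : ∑ i ∈ head, a i * b i ≤ T * ρ :=
    (Real.sum_mul_le_sqrt_mul_sqrt _ _ _).trans (mul_le_mul_of_nonneg_left hb_head (by positivity))
  have tail_le : ∑ i ∈ tail, a i * b i ≤ ρ * T :=
    calc ∑ i ∈ tail, a i * b i ≤ ∑ i ∈ tail, a k * b i := Finset.sum_le_sum fun i hi =>
          mul_le_mul_of_nonneg_right (ha (k_le_of_mem_tail i hi)) (hb0 i)
      _ = a k * ∑ i ∈ tail, b i := (Finset.mul_sum _ _ _).symm
      _ ≤ a k * (ρ * √m) := mul_le_mul_of_nonneg_left hb_tail (ha0 k)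
      _ = ρ * (√m * a k) := by ring
      _ ≤ ρ * T := mul_le_mul_of_nonneg_left hk_head hρ
  calc ∑ i, a i * b i = ∑ i ∈ head, a i * b i + ∑ i ∈ tail, a i * b i :=
        (Finset.sum_filter_add_sum_filter_not _ _ _).symm
    _ ≤ T * ρ + ρ * T := add_le_add head_le tail_le
    _ = 2 * ρ * T := by ring

theorem inner_le_two_mul_sqrt_sum_sq_head {x z : EuclideanSpace ℝ (Fin n)}
    {σ τ : Equiv.Perm (Fin n)} (hσ : Antitone fun i => |x (σ i)|)
    (hτ : Antitone fun i => |z (τ i)|) (hm : 1 ≤ m) (hmn : m ≤ n) {ρ : ℝ} (hz : ‖z‖ ≤ ρ)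
    (hz_tail : ∑ i ∈ Finset.univ.filter (fun i : Fin n => ¬ (i : ℕ) < m), |z (τ i)| ≤ ρ * √m) :
    ⟪x, z⟫ ≤
      2 * ρ * √(∑ i ∈ Finset.univ.filter (fun i : Fin n => (i : ℕ) < m), |x (σ i)| ^ 2) := by
  have hz_head : √(∑ i ∈ Finset.univ.filter (fun i : Fin n => (i : ℕ) < m), |z (τ i)| ^ 2) ≤ ρ :=
    calc _ ≤ √(∑ i, |z (τ i)| ^ 2) := Real.sqrt_le_sqrt <|
          Finset.sum_le_sum_of_subset_of_nonneg (Finset.filter_subset _ _) fun _ _ _ => sq_nonneg _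
      _ = ‖z‖ := by
          rw [EuclideanSpace.norm_eq, Equiv.sum_comp τ fun i => |z i| ^ 2]
          simp only [Real.norm_eq_abs]
      _ ≤ ρ := hz
  exact (inner_le_sum_abs_mul_abs_of_antitone x z hσ hτ).trans <|
    hσ.sum_mul_le_two_mul_sqrt_sum_sq_head (fun _ => abs_nonneg _) (fun _ => abs_nonneg _) hm hmn
      hz_head hz_tail

end SortedSequences

/-- Lemma 4.2: for `x ∈ ℝⁿ`, with `(x_i^*)` the non-increasing rearrangement of `(|x_i|)`
(realized by a permutation `σ` making `i ↦ |x (σ i)|` non-increasing):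
the supremum of `⟨x, z⟩` over `B^n_{p,∞} ∩ ρ B₂ⁿ` (resp. `B₁ⁿ ∩ ρ B₂ⁿ`) is at most
`2 ρ (Σ_{i≤m} (x_i^*)²)^{1/2}` for the corresponding value of `ρ`. -/
theorem statement12 (n m : ℕ) (hm : 1 ≤ m) (hmn : m ≤ n)
    (x : EuclideanSpace ℝ (Fin n)) (σ : Equiv.Perm (Fin n))
    (hσ : ∀ i j : Fin n, i ≤ j → |x (σ j)| ≤ |x (σ i)|) :
    (∀ p : ℝ, 0 < p → p < 1 →
      ∀ z ∈ weakLpBall n p ∩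
        Metric.closedBall (0 : EuclideanSpace ℝ (Fin n))
          ((1 / p - 1)⁻¹ * (m : ℝ) ^ (1 / 2 - 1 / p)),
        ⟪x, z⟫ ≤ 2 * ((1 / p - 1)⁻¹ * (m : ℝ) ^ (1 / 2 - 1 / p)) *
          Real.sqrt (∑ i ∈ Finset.univ.filter fun i : Fin n => (i : ℕ) < m,
            |x (σ i)| ^ 2)) ∧
    (∀ z ∈ l1Ball n ∩
        Metric.closedBall (0 : EuclideanSpace ℝ (Fin n)) (1 / Real.sqrt m),
      ⟪x, z⟫ ≤ 2 * (1 / Real.sqrt m) *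
        Real.sqrt (∑ i ∈ Finset.univ.filter fun i : Fin n => (i : ℕ) < m,
          |x (σ i)| ^ 2)) := by
  have hm0 : (0 : ℝ) < m := by exact_mod_cast hm
  refine ⟨fun p hp hp1 z hz => ?_, fun z hz => ?_⟩
  · obtain ⟨τ, hτ⟩ := exists_perm_antitone_comp fun i => |z i|
    refine inner_le_two_mul_sqrt_sum_sq_head hσ hτ hm hmn (mem_closedBall_zero_iff.1 hz.2) ?_
    calc ∑ i ∈ Finset.univ.filter (fun i : Fin n => ¬ (i : ℕ) < m), |z (τ i)|
        ≤ ∑ i ∈ Finset.univ.filter (fun i : Fin n => ¬ (i : ℕ) < m), ((i + 1 : ℕ) : ℝ) ^ (-p⁻¹) :=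
          Finset.sum_le_sum fun i _ => abs_apply_le_of_mem_weakLpBall hp hz.1 hτ i
      _ = ∑ j ∈ Finset.Ico m n, ((j + 1 : ℕ) : ℝ) ^ (-p⁻¹) :=
          sum_filter_not_val_lt_eq_sum_Ico (fun j => ((j + 1 : ℕ) : ℝ) ^ (-p⁻¹)) m n
      _ ≤ (p⁻¹ - 1)⁻¹ * (m : ℝ) ^ (1 - p⁻¹) := sum_Ico_rpow_neg_le (one_lt_inv₀ hp |>.2 hp1) hm n
      _ = (1 / p - 1)⁻¹ * (m : ℝ) ^ (1 / 2 - 1 / p) * √m := by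
          rw [Real.sqrt_eq_rpow, mul_assoc, ← Real.rpow_add hm0]
          ring_nf
  · obtain ⟨τ, hτ⟩ := exists_perm_antitone_comp fun i => |z i|
    refine inner_le_two_mul_sqrt_sum_sq_head hσ hτ hm hmn (mem_closedBall_zero_iff.1 hz.2) ?_
    calc ∑ i ∈ Finset.univ.filter (fun i : Fin n => ¬ (i : ℕ) < m), |z (τ i)|
        ≤ ∑ i, |z (τ i)| := Finset.sum_le_sum_of_subset_of_nonneg (Finset.filter_subset _ _)
          fun _ _ _ => abs_nonneg _
      _ = ∑ i, |z i| := Equiv.sum_comp τ fun i => |z i|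
      _ ≤ 1 := hz.1
      _ = 1 / √m * √m := by field_simp
end
end

section
/- For every 1 ≤ m ≤ n and every subset I ⊂ {1,…,n} with |I| ≤ m, one has √|I|·B₁ⁿ ∩ S^{n−1} ⊆ 2·conv(U_m) ∩ S^{n−1}, where U_m = {x ∈ S^{n−1} : |{i : x_i ≠ 0}| ≤ m}. -/
open MeasureTheory Real Set
open scoped RealInnerProductSpace Pointwise

noncomputable section

/-- The set of unit vectors with support of size at most `m`. -/
def sparseSphere (n m : ℕ) : Set (EuclideanSpace ℝ (Fin n)) :=
  {x | x ∈ Metric.sphere (0 : EuclideanSpace ℝ (Fin n)) 1 ∧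
    (Finset.univ.filter fun i : Fin n => x i ≠ 0).card ≤ m}

/-!
Sort the coordinates of `x` by decreasing modulus and cut them into consecutive blocks of `m`.
The first block has Euclidean norm at most `‖x‖ = 1`. Every entry of block `k + 1` is at most the
mean modulus on block `k`, so block `k + 1` has norm at most `‖block k‖₁ / √m`, and the block norms
sum to at most `1 + ‖x‖₁ / √m ≤ 2`. A block of norm `c` lies in `c • conv U_m`, and
`(a + b) • C = a • C + b • C` for the convex set `C = conv U_m`, which also contains `0`; hence
`x ∈ 2 • conv U_m`. The blocks are peeled off one at a time, by induction on the support size.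
-/

open Finset

theorem Finset.exists_subset_card_eq_forall_le {ι α : Type*} [DecidableEq ι] [LinearOrder α]
    (f : ι → α) (s : Finset ι) {k : ℕ} (hk : k ≤ s.card) :
    ∃ t ⊆ s, t.card = k ∧ ∀ i ∈ t, ∀ j ∈ s \ t, f j ≤ f i := by
  induction k with
  | zero => exact ⟨∅, empty_subset _, rfl, by simp⟩
  | succ k ih =>
    obtain ⟨t, hts, rfl, ht⟩ := ih (by omega)
    obtain ⟨j, hj, hjmax⟩ := (s \ t).exists_max_image f
      (by rw [← card_pos, card_sdiff_of_subset hts]; omega)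
    rw [mem_sdiff] at hj
    refine ⟨insert j t, insert_subset hj.1 hts, card_insert_of_notMem hj.2, ?_⟩
    intro i hi l hl
    rw [sdiff_insert] at hl
    rcases Finset.mem_insert.1 hi with rfl | hi
    · exact hjmax l (mem_of_mem_erase hl)
    · exact ht i hi l (mem_of_mem_erase hl)

theorem Convex.smul_subset_smul_of_zero_mem {𝕜 E : Type*} [Field 𝕜] [LinearOrder 𝕜]
    [IsStrictOrderedRing 𝕜] [AddCommGroup E] [Module 𝕜 E] {s : Set E} (hs : Convex 𝕜 s)
    (h0 : 0 ∈ s) {a b : 𝕜} (ha : 0 ≤ a) (hab : a ≤ b) : a • s ⊆ b • s := by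
  intro y hy
  rw [← add_sub_cancel a b, hs.add_smul ha (sub_nonneg.2 hab)]
  exact ⟨y, hy, 0, Set.zero_mem_smul_set h0, add_zero y⟩

namespace EuclideanSpace

section Norm

variable {ι : Type*} [Fintype ι]

def coordSupport (x : EuclideanSpace ℝ ι) : Finset ι := univ.filter fun i => x i ≠ 0

theorem norm_le_norm_of_abs_le {x y : EuclideanSpace ℝ ι} (h : ∀ i, |y i| ≤ |x i|) :
    ‖y‖ ≤ ‖x‖ := by
  rw [← pow_le_pow_iff_left₀ (norm_nonneg y) (norm_nonneg x) two_ne_zero, norm_sq_eq, norm_sq_eq]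
  gcongr with i
  simpa only [Real.norm_eq_abs] using h i

theorem norm_le_sqrt_mul_of_abs_le {m : ℕ} {a : ℝ} {y : EuclideanSpace ℝ ι}
    (hy : (coordSupport y).card ≤ m) (ha : 0 ≤ a) (h : ∀ i, |y i| ≤ a) : ‖y‖ ≤ √m * a := by
  rw [← pow_le_pow_iff_left₀ (norm_nonneg y) (by positivity) two_ne_zero, norm_sq_eq, mul_pow,
    Real.sq_sqrt m.cast_nonneg]
  calc ∑ i, ‖y i‖ ^ 2 = ∑ i ∈ coordSupport y, ‖y i‖ ^ 2 :=
        (sum_subset (subset_univ _) fun i _ hi => by simp_all [coordSupport]).symm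
    _ ≤ ∑ _i ∈ coordSupport y, a ^ 2 :=
        sum_le_sum fun i _ => by rw [Real.norm_eq_abs]; gcongr; exact h i
    _ ≤ m * a ^ 2 := by rw [sum_const, nsmul_eq_mul]; gcongr

end Norm

section Restrict

variable {ι : Type*} [DecidableEq ι]

def restrictCoords (T : Finset ι) (x : EuclideanSpace ℝ ι) : EuclideanSpace ℝ ι :=
  WithLp.toLp 2 fun i => if i ∈ T then x i else 0

@[simp]
theorem restrictCoords_apply (T : Finset ι) (x : EuclideanSpace ℝ ι) (i : ι) :
    restrictCoords T x i = if i ∈ T then x i else 0 := rfl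

variable [Fintype ι]

theorem restrictCoords_add_restrictCoords_compl (T : Finset ι) (x : EuclideanSpace ℝ ι) :
    restrictCoords T x + restrictCoords Tᶜ x = x := by
  ext i
  by_cases hi : i ∈ T <;> simp [hi]

theorem coordSupport_restrictCoords (T : Finset ι) (x : EuclideanSpace ℝ ι) :
    coordSupport (restrictCoords T x) = coordSupport x ∩ T := by
  ext i
  by_cases hi : i ∈ T <;> simp [coordSupport, hi]

theorem sum_abs_restrictCoords (T : Finset ι) (x : EuclideanSpace ℝ ι) :
    ∑ i, |restrictCoords T x i| = ∑ i ∈ T, |x i| := by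
  simp [apply_ite, sum_ite_mem]

theorem exists_top_block {m : ℕ} (hm : 1 ≤ m) (x : EuclideanSpace ℝ ι) :
    ∃ T ⊆ coordSupport x, T.card ≤ m ∧ (x ≠ 0 → T.Nonempty) ∧
      ∀ j ∉ T, m * |x j| ≤ ∑ i ∈ T, |x i| := by
  obtain ⟨T, hTs, hTcard, hTtop⟩ := exists_subset_card_eq_forall_le (fun i => |x i|)
    (coordSupport x) (min_le_right m (coordSupport x).card)
  refine ⟨T, hTs, hTcard ▸ min_le_left _ _, fun hx => ?_, fun j hj => ?_⟩
  · have : (coordSupport x).Nonempty := by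
      contrapose! hx
      ext i
      simp only [coordSupport, filter_eq_empty_iff, Finset.mem_univ, not_not, true_implies] at hx
      simp [hx]
    rw [← card_pos, hTcard]
    have := this.card_pos
    omega
  · by_cases hjs : j ∈ coordSupport x
    · have hlt : T.card < (coordSupport x).card :=
        card_lt_card ⟨hTs, fun h => hj (h hjs)⟩
      have hTm : T.card = m := by omega
      calc m * |x j| = ∑ _i ∈ T, |x j| := by rw [sum_const, nsmul_eq_mul, hTm]
        _ ≤ ∑ i ∈ T, |x i| := sum_le_sum fun i hi => hTtop i hi j (mem_sdiff.2 ⟨hjs, hj⟩)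
    · have : x j = 0 := by simpa [coordSupport] using hjs
      simpa [this] using sum_nonneg fun i _ => abs_nonneg (x i)

theorem exists_eq_sparse_add_tail {m : ℕ} (hm : 1 ≤ m) (x : EuclideanSpace ℝ ι) :
    ∃ y r : EuclideanSpace ℝ ι, x = y + r ∧ (coordSupport y).card ≤ m ∧ (∀ i, |y i| ≤ |x i|) ∧
      (∀ i, m * |r i| ≤ ∑ i, |y i|) ∧ ∑ i, |x i| = ∑ i, |y i| + ∑ i, |r i| ∧
      (x ≠ 0 → (coordSupport r).card < (coordSupport x).card) := by
  obtain ⟨T, hTs, hTm, hTne, hTtop⟩ := exists_top_block hm x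
  refine ⟨restrictCoords T x, restrictCoords Tᶜ x,
    (restrictCoords_add_restrictCoords_compl T x).symm, ?_, fun i => ?_, fun i => ?_, ?_,
    fun hx => ?_⟩
  · rw [coordSupport_restrictCoords]
    exact (Finset.card_le_card inter_subset_right).trans hTm
  · simp only [restrictCoords_apply]
    split_ifs <;> simp
  · rw [sum_abs_restrictCoords]
    by_cases hi : i ∈ T
    · simpa [hi] using sum_nonneg fun i _ => abs_nonneg (x i)
    · simpa [hi] using hTtop i hi
  · rw [sum_abs_restrictCoords, sum_abs_restrictCoords, sum_add_sum_compl]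
  · rw [coordSupport_restrictCoords, ← sdiff_eq_inter_compl]
    exact card_lt_card (sdiff_ssubset hTs (hTne hx))

end Restrict

end EuclideanSpace

open EuclideanSpace

section SparseSphere

variable {n m : ℕ}

theorem single_mem_sparseSphere (hm : 1 ≤ m) (i : Fin n) {a : ℝ} (ha : |a| = 1) :
    EuclideanSpace.single i a ∈ sparseSphere n m := by
  refine ⟨by simp [ha], le_trans (Finset.card_le_card (t := {i}) fun j hj => ?_)
    (by simpa using hm)⟩
  simp only [Finset.mem_filter, PiLp.single_apply, ne_eq, ite_eq_right_iff, not_forall] at hj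
  exact Finset.mem_singleton.2 hj.2.1

theorem zero_mem_convexHull_sparseSphere (hm : 1 ≤ m) (hn : 0 < n) :
    (0 : EuclideanSpace ℝ (Fin n)) ∈ convexHull ℝ (sparseSphere n m) := by
  have hmem (a : ℝ) (ha : |a| = 1) :=
    subset_convexHull ℝ _ (single_mem_sparseSphere hm ⟨0, hn⟩ ha)
  convert convex_convexHull ℝ (sparseSphere n m) (hmem 1 (by simp)) (hmem (-1) (by simp))
    (by norm_num : (0 : ℝ) ≤ 1 / 2) (by norm_num : (0 : ℝ) ≤ 1 / 2) (by norm_num) using 1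
  ext j
  by_cases hj : j = ⟨0, hn⟩ <;> simp [hj]

theorem mem_norm_smul_convexHull_sparseSphere
    (h0 : (0 : EuclideanSpace ℝ (Fin n)) ∈ convexHull ℝ (sparseSphere n m))
    {y : EuclideanSpace ℝ (Fin n)} (hy : (coordSupport y).card ≤ m) :
    y ∈ ‖y‖ • convexHull ℝ (sparseSphere n m) := by
  rcases eq_or_ne y 0 with rfl | hy0
  · exact Set.zero_mem_smul_set h0
  have hsupp : coordSupport (‖y‖⁻¹ • y) = coordSupport y := by
    ext i
    simp [coordSupport, hy0]
  refine ⟨‖y‖⁻¹ • y,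
    subset_convexHull ℝ _ ⟨?_, show (coordSupport (‖y‖⁻¹ • y)).card ≤ m by rwa [hsupp]⟩,
    smul_inv_smul₀ (norm_ne_zero_iff.2 hy0) y⟩
  simp [norm_smul, hy0]

/-- Each peeled-off top block has norm at most `‖previous block‖₁ / √m` (the first one at most
`b / √m`), and these bounds telescope to `(b + ‖x‖₁) / √m`. -/
theorem mem_smul_convexHull_sparseSphere_of_abs_le
    (h0 : (0 : EuclideanSpace ℝ (Fin n)) ∈ convexHull ℝ (sparseSphere n m)) (hm : 1 ≤ m)
    (x : EuclideanSpace ℝ (Fin n)) {b : ℝ} (hb : 0 ≤ b) (hx : ∀ i, m * |x i| ≤ b) :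
    x ∈ ((b + ∑ i, |x i|) / √m) • convexHull ℝ (sparseSphere n m) := by
  have hK := convex_convexHull ℝ (sparseSphere n m)
  induction hk : (coordSupport x).card using Nat.strong_induction_on generalizing x b with
  | _ k ih =>
  rcases eq_or_ne x 0 with rfl | hx0
  · exact Set.zero_mem_smul_set h0
  obtain ⟨y, r, rfl, hym, hyx, hry, hl1, hlt⟩ := exists_eq_sparse_add_tail hm x
  have hm0 : (0 : ℝ) < m := by exact_mod_cast hm
  have hy : y ∈ (b / √m) • convexHull ℝ (sparseSphere n m) := by
    refine hK.smul_subset_smul_of_zero_mem h0 (norm_nonneg _) ?_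
      (mem_norm_smul_convexHull_sparseSphere h0 hym)
    calc ‖y‖ ≤ √m * (b / m) := norm_le_sqrt_mul_of_abs_le hym (by positivity) fun i => by
          rw [le_div_iff₀ hm0, mul_comm]
          exact (mul_le_mul_of_nonneg_left (hyx i) hm0.le).trans (hx i)
      _ = b / √m := by rw [mul_div_left_comm, Real.sqrt_div_self', mul_one_div]
  have hr := ih _ (hk ▸ hlt hx0) r (sum_nonneg fun i _ => abs_nonneg (y i)) hry rfl
  rw [hl1, add_div, hK.add_smul (by positivity) (by positivity)]
  exact Set.add_mem_add hy hr

theorem mem_smul_convexHull_sparseSphere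
    (h0 : (0 : EuclideanSpace ℝ (Fin n)) ∈ convexHull ℝ (sparseSphere n m)) (hm : 1 ≤ m)
    (x : EuclideanSpace ℝ (Fin n)) :
    x ∈ (‖x‖ + (∑ i, |x i|) / √m) • convexHull ℝ (sparseSphere n m) := by
  have hK := convex_convexHull ℝ (sparseSphere n m)
  obtain ⟨y, r, rfl, hym, hyx, hry, hl1, -⟩ := exists_eq_sparse_add_tail hm x
  have hy : y ∈ ‖y + r‖ • convexHull ℝ (sparseSphere n m) :=
    hK.smul_subset_smul_of_zero_mem h0 (norm_nonneg _) (norm_le_norm_of_abs_le hyx)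
      (mem_norm_smul_convexHull_sparseSphere h0 hym)
  have hr := mem_smul_convexHull_sparseSphere_of_abs_le h0 hm r
    (sum_nonneg fun i _ => abs_nonneg (y i)) hry
  rw [hl1, hK.add_smul (norm_nonneg _) (by positivity)]
  exact Set.add_mem_add hy hr

end SparseSphere

/-- Equation (4): `√|I| B₁ⁿ ∩ S^{n-1} ⊆ 2 conv(U_m) ∩ S^{n-1}` for any `I` with `|I| ≤ m`. -/
theorem statement13 (n m : ℕ) (hm : 1 ≤ m) (hmn : m ≤ n)
    (I : Finset (Fin n)) (hI : I.card ≤ m) :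
    (Real.sqrt I.card • l1Ball n) ∩ Metric.sphere (0 : EuclideanSpace ℝ (Fin n)) 1 ⊆
      ((2 : ℝ) • convexHull ℝ (sparseSphere n m)) ∩
        Metric.sphere (0 : EuclideanSpace ℝ (Fin n)) 1 := by
  rintro _ ⟨⟨z, hz, rfl⟩, hx⟩
  refine ⟨?_, hx⟩
  have h0 := zero_mem_convexHull_sparseSphere hm (hm.trans hmn)
  have hl1 : ∑ i, |(√I.card • z) i| ≤ √m := calc
    ∑ i, |(√I.card • z) i| = √I.card * ∑ i, |z i| := by
      simp [abs_mul, mul_sum, abs_of_nonneg (Real.sqrt_nonneg _)]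
    _ ≤ √I.card * 1 := by gcongr; exact hz
    _ ≤ √m := by rw [mul_one]; gcongr
  have hcoef : ‖√I.card • z‖ + (∑ i, |(√I.card • z) i|) / √m ≤ 2 := by
    rw [mem_sphere_zero_iff_norm.1 hx]
    linarith [div_le_one_of_le₀ hl1 (Real.sqrt_nonneg m)]
  exact (convex_convexHull ℝ _).smul_subset_smul_of_zero_mem h0 (by positivity) hcoef
    (mem_smul_convexHull_sparseSphere h0 hm _)
end
end

section
/- There exists an absolute constant c > 0 such that for every 1 ≤ m ≤ n, ℓ_*(conv(U_m)) ≤ c·√(m·log(c·n/m)), where U_m = {x ∈ S^{n−1} : |{i : x_i ≠ 0}| ≤ m}. -/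
open MeasureTheory ProbabilityTheory Real Set
open scoped RealInnerProductSpace Pointwise

noncomputable section

/-- `ℓ_*(T) = E sup_{t ∈ T} |Σ g_i t_i|` for independent standard Gaussians `g_i`. -/
def ellStar (n : ℕ) (T : Set (EuclideanSpace ℝ (Fin n))) : ℝ :=
  ∫ g : Fin n → ℝ, (⨆ t ∈ T, |∑ i, g i * t i|) ∂(Measure.pi fun _ => gaussianReal 0 1)

/-! For a unit vector `x` supported on at most `m` coordinates and any threshold `t ≥ 0`,
Cauchy–Schwarz on the support gives `⟨g, x⟩² ≤ ∑_{i ∈ supp x} g_i² ≤ m t + ∑_i (g_i² - t)₊`, and the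
bound passes to `conv U_m` because `|⟨g, ·⟩|` is convex. By Jensen for `√`,
`ℓ_*(conv U_m) ≤ √(m t + n 𝔼(g² - t)₊)`, and `𝔼(g² - t)₊ ≤ 4 e^{-t/4} 𝔼 e^{g²/4} = 4√2 e^{-t/4}`.
The choice `t = 4 log(3n/m)` makes the second term `O(m)`. -/

lemma max_le_mul_exp_div (y : ℝ) {c : ℝ} (hc : 0 < c) : max y 0 ≤ c * exp (y / c) := by
  refine max_le ?_ (by positivity)
  have hexp := add_one_le_exp (y / c)
  have hy : y / c * c = y := div_mul_cancel₀ y hc.ne'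
  nlinarith

lemma gaussianPDFReal_zero_one_mul_exp_mul_sq (a x : ℝ) :
    gaussianPDFReal 0 1 x * exp (a * x ^ 2) = (√(2 * π))⁻¹ * exp (-(1 / 2 - a) * x ^ 2) := by
  rw [gaussianPDFReal, mul_assoc, ← exp_add]
  simp only [NNReal.coe_one, mul_one, sub_zero]
  ring_nf

lemma integrable_exp_mul_sq_gaussianReal {a : ℝ} (ha : a < 1 / 2) :
    Integrable (fun x => exp (a * x ^ 2)) (gaussianReal 0 1) := by
  rw [gaussianReal_of_var_ne_zero 0 one_ne_zero, integrable_withDensity_iff_integrable_smul'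
    (measurable_gaussianPDF 0 1) (ae_of_all _ fun _ => gaussianPDF_lt_top)]
  simp only [toReal_gaussianPDF, smul_eq_mul, gaussianPDFReal_zero_one_mul_exp_mul_sq]
  exact (integrable_exp_neg_mul_sq (by linarith)).const_mul _

lemma integral_exp_mul_sq_gaussianReal {a : ℝ} (ha : a < 1 / 2) :
    ∫ x, exp (a * x ^ 2) ∂gaussianReal 0 1 = (√(1 - 2 * a))⁻¹ := by
  simp only [integral_gaussianReal_eq_integral_smul one_ne_zero, smul_eq_mul,
    gaussianPDFReal_zero_one_mul_exp_mul_sq, integral_const_mul, integral_gaussian]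
  rw [show π / (1 / 2 - a) = 2 * π / (1 - 2 * a) by field_simp, sqrt_div' _ (by linarith),
    div_eq_mul_inv, inv_mul_cancel_left₀ (by positivity)]

lemma max_sq_sub_le_exp (t x : ℝ) :
    max (x ^ 2 - t) 0 ≤ 4 * exp (-t / 4) * exp (1 / 4 * x ^ 2) := by
  calc max (x ^ 2 - t) 0 ≤ 4 * exp ((x ^ 2 - t) / 4) := max_le_mul_exp_div _ four_pos
    _ = 4 * exp (-t / 4) * exp (1 / 4 * x ^ 2) := by rw [mul_assoc, ← exp_add]; ring_nf

lemma integrable_max_sq_sub_gaussianReal (t : ℝ) :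
    Integrable (fun x => max (x ^ 2 - t) 0) (gaussianReal 0 1) := by
  refine ((integrable_exp_mul_sq_gaussianReal (a := 1 / 4) (by norm_num)).const_mul
    (4 * exp (-t / 4))).mono' (by fun_prop) (ae_of_all _ fun x => ?_)
  rw [norm_of_nonneg (le_max_right _ _)]
  exact max_sq_sub_le_exp t x

lemma integral_max_sq_sub_gaussianReal_le (t : ℝ) :
    ∫ x, max (x ^ 2 - t) 0 ∂gaussianReal 0 1 ≤ 6 * exp (-t / 4) := by
  have hmoment : ∫ x, exp (1 / 4 * x ^ 2) ∂gaussianReal 0 1 ≤ 3 / 2 := by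
    rw [integral_exp_mul_sq_gaussianReal (by norm_num), inv_le_comm₀ (by positivity) (by norm_num),
      le_sqrt (by norm_num) (by norm_num)]
    norm_num
  calc ∫ x, max (x ^ 2 - t) 0 ∂gaussianReal 0 1
      ≤ ∫ x, 4 * exp (-t / 4) * exp (1 / 4 * x ^ 2) ∂gaussianReal 0 1 :=
        integral_mono (integrable_max_sq_sub_gaussianReal t)
          ((integrable_exp_mul_sq_gaussianReal (by norm_num)).const_mul _) (max_sq_sub_le_exp t)
    _ ≤ 4 * exp (-t / 4) * (3 / 2) := by
        rw [integral_const_mul]; gcongr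
    _ = 6 * exp (-t / 4) := by ring

section GaussianVector

variable {ι : Type*} [Fintype ι]

lemma integrable_max_sq_sub_comp_eval (t : ℝ) (i : ι) :
    Integrable (fun g : ι → ℝ => max (g i ^ 2 - t) 0) (Measure.pi fun _ => gaussianReal 0 1) :=
  integrable_comp_eval (X := fun _ => ℝ) (f := fun x => max (x ^ 2 - t) 0)
    (integrable_max_sq_sub_gaussianReal t)

lemma integrable_sum_max_sq_sub_gaussian (t : ℝ) :
    Integrable (fun g : ι → ℝ => ∑ i, max (g i ^ 2 - t) 0)
      (Measure.pi fun _ => gaussianReal 0 1) :=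
  integrable_finsetSum _ fun i _ => integrable_max_sq_sub_comp_eval t i

lemma integral_sum_max_sq_sub_gaussian_le (t : ℝ) :
    ∫ g, ∑ i, max (g i ^ 2 - t) 0 ∂(Measure.pi fun _ : ι => gaussianReal 0 1) ≤
      6 * Fintype.card ι * exp (-t / 4) := by
  have hmarginal (i : ι) :
      ∫ g : ι → ℝ, max (g i ^ 2 - t) 0 ∂(Measure.pi fun _ => gaussianReal 0 1) =
        ∫ x, max (x ^ 2 - t) 0 ∂gaussianReal 0 1 :=
    integral_comp_eval (X := fun _ => ℝ) (f := fun x => max (x ^ 2 - t) 0)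
      (integrable_max_sq_sub_gaussianReal t).aestronglyMeasurable
  rw [integral_finsetSum _ fun i _ => integrable_max_sq_sub_comp_eval t i]
  simp only [hmarginal, Finset.sum_const, Finset.card_univ, nsmul_eq_mul]
  rw [mul_comm 6, mul_assoc]
  exact mul_le_mul_of_nonneg_left (integral_max_sq_sub_gaussianReal_le t) (Nat.cast_nonneg _)

end GaussianVector

lemma MeasureTheory.Integrable.sqrt {α : Type*} [MeasurableSpace α] {μ : Measure α}
    [IsFiniteMeasure μ] {f : α → ℝ} (hf : Integrable f μ) : Integrable (fun a => √(f a)) μ := by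
  refine ((integrable_const 1).add hf.abs).mono' (continuous_sqrt.comp_aestronglyMeasurable
    hf.aestronglyMeasurable) (ae_of_all _ fun a => ?_)
  rw [Pi.add_apply, norm_of_nonneg (sqrt_nonneg _), sqrt_le_iff]
  constructor <;> nlinarith [abs_nonneg (f a), le_abs_self (f a)]

lemma integral_sqrt_le_sqrt_integral {α : Type*} [MeasurableSpace α] {μ : Measure α}
    [IsProbabilityMeasure μ] {f : α → ℝ} (hf0 : 0 ≤ᵐ[μ] f) (hf : Integrable f μ) :
    ∫ a, √(f a) ∂μ ≤ √(∫ a, f a ∂μ) :=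
  (strictConcaveOn_sqrt.concaveOn).le_map_integral continuous_sqrt.continuousOn isClosed_Ici
    hf0 hf hf.sqrt

lemma abs_le_of_mem_convexHull {E : Type*} [AddCommGroup E] [Module ℝ E] (φ : E →ₗ[ℝ] ℝ)
    {s : Set E} {B : ℝ} (hs : ∀ x ∈ s, |φ x| ≤ B) {x : E} (hx : x ∈ convexHull ℝ s) :
    |φ x| ≤ B := by
  obtain ⟨y, hy, hxy⟩ :=
    (convexOn_univ_norm.comp_linearMap φ).exists_ge_of_mem_convexHull (subset_univ s) hx
  exact hxy.trans (hs y hy)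

lemma sq_sum_mul_le_of_card_support_le {ι : Type*} [Fintype ι] {m : ℕ} {t : ℝ} (ht : 0 ≤ t)
    (g x : ι → ℝ) (hx : ∑ i, x i ^ 2 ≤ 1) (hsupp : (Finset.univ.filter fun i => x i ≠ 0).card ≤ m) :
    (∑ i, g i * x i) ^ 2 ≤ m * t + ∑ i, max (g i ^ 2 - t) 0 := by
  set A := Finset.univ.filter fun i => x i ≠ 0
  have hsum : ∑ i, g i * x i = ∑ i ∈ A, g i * x i :=
    (Finset.sum_filter_of_ne fun i _ h => by rintro hxi; simp [hxi] at h).symm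
  have hxA : ∑ i ∈ A, x i ^ 2 ≤ 1 :=
    (Finset.sum_le_sum_of_subset_of_nonneg (Finset.filter_subset _ _)
      fun i _ _ => sq_nonneg _).trans hx
  have hgA : ∑ i ∈ A, g i ^ 2 ≤ m * t + ∑ i, max (g i ^ 2 - t) 0 :=
    calc ∑ i ∈ A, g i ^ 2 ≤ ∑ i ∈ A, (t + max (g i ^ 2 - t) 0) :=
          Finset.sum_le_sum fun i _ => by linarith [le_max_left (g i ^ 2 - t) 0]
      _ = A.card * t + ∑ i ∈ A, max (g i ^ 2 - t) 0 := by
          rw [Finset.sum_add_distrib, Finset.sum_const, nsmul_eq_mul]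
      _ ≤ m * t + ∑ i, max (g i ^ 2 - t) 0 := by
          gcongr ?_ * t + ?_
          · exact_mod_cast hsupp
          · exact Finset.sum_le_sum_of_subset_of_nonneg (Finset.filter_subset _ _)
              fun i _ _ => le_max_right _ _
  calc (∑ i, g i * x i) ^ 2 ≤ (∑ i ∈ A, g i ^ 2) * ∑ i ∈ A, x i ^ 2 := by
        rw [hsum]; exact Finset.sum_mul_sq_le_sq_mul_sq A g x
    _ ≤ ∑ i ∈ A, g i ^ 2 := mul_le_of_le_one_right (Finset.sum_nonneg fun i _ => sq_nonneg _) hxA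
    _ ≤ _ := hgA

lemma iSup_abs_sum_mul_convexHull_sparseSphere_le (n m : ℕ) {t : ℝ} (ht : 0 ≤ t) (g : Fin n → ℝ) :
    (⨆ x ∈ convexHull ℝ (sparseSphere n m), |∑ i, g i * x i|) ≤
      √(m * t + ∑ i, max (g i ^ 2 - t) 0) := by
  refine Real.iSup_le (fun x => Real.iSup_le (fun hx => ?_) (sqrt_nonneg _)) (sqrt_nonneg _)
  have hφ (y : EuclideanSpace ℝ (Fin n)) : innerₛₗ ℝ (WithLp.toLp 2 g) y = ∑ i, g i * y i := by
    simp [PiLp.inner_apply, mul_comm]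
  rw [← hφ]
  refine abs_le_of_mem_convexHull _ (fun y hy => ?_) hx
  obtain ⟨hy, hsupp⟩ := hy
  rw [hφ]
  refine abs_le_sqrt (sq_sum_mul_le_of_card_support_le ht g y ?_ hsupp)
  rw [← EuclideanSpace.real_norm_sq_eq, mem_sphere_zero_iff_norm.mp hy, one_pow]

lemma ellStar_convexHull_sparseSphere_le (n m : ℕ) {t : ℝ} (ht : 0 ≤ t) :
    ellStar n (convexHull ℝ (sparseSphere n m)) ≤ √(m * t + 6 * n * exp (-t / 4)) := by
  set γ : Measure (Fin n → ℝ) := Measure.pi fun _ => gaussianReal 0 1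
  set X : (Fin n → ℝ) → ℝ := fun g => m * t + ∑ i, max (g i ^ 2 - t) 0
  have hX0 : 0 ≤ X := fun g =>
    add_nonneg (by positivity) (Finset.sum_nonneg fun i _ => le_max_right _ _)
  have hX : Integrable X γ := (integrable_const _).add (integrable_sum_max_sq_sub_gaussian t)
  calc ellStar n (convexHull ℝ (sparseSphere n m))
      ≤ ∫ g, √(X g) ∂γ :=
        integral_mono_of_nonneg
          (ae_of_all _ fun g => Real.iSup_nonneg fun x => Real.iSup_nonneg fun _ => abs_nonneg _)
          hX.sqrt (ae_of_all _ (iSup_abs_sum_mul_convexHull_sparseSphere_le n m ht))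
    _ ≤ √(∫ g, X g ∂γ) := integral_sqrt_le_sqrt_integral (ae_of_all _ hX0) hX
    _ ≤ √(m * t + 6 * n * exp (-t / 4)) := by
        gcongr
        rw [integral_add (integrable_const _) (integrable_sum_max_sq_sub_gaussian t),
          integral_const, probReal_univ, one_smul]
        simpa using integral_sum_max_sq_sub_gaussian_le (ι := Fin n) t

/-- Lemma 4.3: `ℓ_*(conv U_m) ≤ c √(m log(c n / m))`. -/
theorem statement14 :
    ∃ c > (0 : ℝ), ∀ n m : ℕ, 1 ≤ m → m ≤ n →
      ellStar n (convexHull ℝ (sparseSphere n m)) ≤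
        c * Real.sqrt (m * Real.log (c * n / m)) := by
  refine ⟨3, by norm_num, fun n m hm hmn => ?_⟩
  have hm0 : (0 : ℝ) < m := by exact_mod_cast hm
  have hmn' : (m : ℝ) ≤ n := by exact_mod_cast hmn
  have hn0 : (n : ℝ) ≠ 0 := (hm0.trans_le hmn').ne'
  set L := log (3 * n / m)
  have hratio : 3 ≤ 3 * (n : ℝ) / m := by rw [le_div_iff₀ hm0]; linarith
  have hL : 1 ≤ L := by
    rw [le_log_iff_exp_le (by linarith)]
    linarith [exp_one_lt_d9]
  have hexp : exp (-(4 * L) / 4) = m / (3 * n) := by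
    rw [show -(4 * L) / 4 = -L by ring, exp_neg, exp_log (by linarith), inv_div]
  calc ellStar n (convexHull ℝ (sparseSphere n m))
      ≤ √(m * (4 * L) + 6 * n * exp (-(4 * L) / 4)) :=
        ellStar_convexHull_sparseSphere_le n m (by linarith)
    _ ≤ √(3 ^ 2 * (m * L)) := by
        gcongr
        rw [hexp, show (6 * n * (m / (3 * n)) : ℝ) = 2 * m by field_simp; ring]
        nlinarith
    _ = 3 * √(m * L) := by rw [sqrt_mul (by norm_num), sqrt_sq (by norm_num)]
end
end
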